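/- arXiv:2603.22482 — 3 statements merged into one kernel-verified Lean document; each statement's English description precedes it below -/
import Mathlib

section
/- Let ψ ∈ H¹(ℝ, ℂ) be a solution of the ODE -ψ'' - (ω + c²/4)ψ + A|ψ|²ψ + B|ψ|⁴ψ + G·ψ·Im(ψ'ψ̄) + γ·ψ·(H(|ψ|²))' = 0, where H is the Hilbert transform. Then Im(ψ' ψ̄) = 0 identically on ℝ. -/
open MeasureTheory Real Complex Filter

noncomputable section

/-- The Hilbert transform, defined as the Fourier multiplier with symbol `-i · sgn ξ`. -/
def hilbertT (f : ℝ → ℂ) : ℝ → ℂ :=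
  fun x => FourierTransformInv.fourierInv
    (fun ξ => -Complex.I * (Real.sign ξ : ℂ) * FourierTransform.fourier f ξ) x

/-- The operator `|D|^{1/2}`, the Fourier multiplier with symbol `|ξ|^{1/2}`. -/
def halfD (f : ℝ → ℂ) : ℝ → ℂ :=
  fun x => FourierTransformInv.fourierInv
    (fun ξ => (Real.sqrt |ξ| : ℂ) * FourierTransform.fourier f ξ) x

open scoped FourierTransform

lemma conj_fourierIntegral (f : ℝ → ℂ) (ξ : ℝ) :
    (starRingEnd ℂ) (𝓕 f ξ) = 𝓕 (fun x => (starRingEnd ℂ) (f x)) (-ξ) := by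
  rw [Real.fourier_real_eq_integral_exp_smul,
    Real.fourier_real_eq_integral_exp_smul, ← integral_conj]
  congr 1
  ext v
  simp only [smul_eq_mul, map_mul, ← Complex.exp_conj, Complex.conj_I, Complex.conj_ofReal]
  congr 1
  push_cast
  ring

lemma hilbertT_conj_self (f : ℝ → ℂ) (hf : ∀ x, (starRingEnd ℂ) (f x) = f x) (x : ℝ) :
    (starRingEnd ℂ) (hilbertT f x) = hilbertT f x := by
  have hfe : (fun y => (starRingEnd ℂ) (f y)) = f := funext hf
  unfold hilbertT
  rw [Real.fourierInv_eq_fourier_neg, conj_fourierIntegral, neg_neg,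
    Real.fourier_real_eq_integral_exp_smul,
    Real.fourier_real_eq_integral_exp_smul]
  have key : ∀ v : ℝ,
      Complex.exp (↑(-2 * π * v * x) * Complex.I) •
        (starRingEnd ℂ) (-Complex.I * (Real.sign v : ℂ) * 𝓕 f v)
      = (fun w : ℝ => Complex.exp (↑(-2 * π * w * (-x)) * Complex.I) •
          (-Complex.I * (Real.sign w : ℂ) * 𝓕 f w)) (-v) := by
    intro v
    have h1 : (starRingEnd ℂ) (𝓕 f v) = 𝓕 f (-v) := by
      rw [conj_fourierIntegral, hfe]
    simp only [smul_eq_mul, map_mul, Complex.conj_I, Complex.conj_ofReal, h1, map_neg,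
      Real.sign_neg, Complex.ofReal_neg]
    push_cast
    ring_nf
  calc (∫ v : ℝ, Complex.exp (↑(-2 * π * v * x) * Complex.I) •
          (starRingEnd ℂ) (-Complex.I * (Real.sign v : ℂ) * 𝓕 f v))
      = ∫ v : ℝ, (fun w : ℝ => Complex.exp (↑(-2 * π * w * (-x)) * Complex.I) •
          (-Complex.I * (Real.sign w : ℂ) * 𝓕 f w)) (-v) := by
        congr 1; ext v; exact key v
    _ = ∫ v : ℝ, Complex.exp (↑(-2 * π * v * (-x)) * Complex.I) •
          (-Complex.I * (Real.sign v : ℂ) * 𝓕 f v) :=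
        integral_neg_eq_self (fun w : ℝ => Complex.exp (↑(-2 * π * w * (-x)) * Complex.I) •
          (-Complex.I * (Real.sign w : ℂ) * 𝓕 f w)) volume

lemma im_deriv_eq_zero (h : ℝ → ℂ) (hh : ∀ x, (starRingEnd ℂ) (h x) = h x) (x : ℝ) :
    (deriv h x).im = 0 := by
  by_cases hd : DifferentiableAt ℝ h x
  · have h1 : HasDerivAt (fun y => (starRingEnd ℂ) (h y)) ((starRingEnd ℂ) (deriv h x)) x := by
      simpa [Function.comp_def] using
        Complex.conjCLE.hasFDerivAt.comp_hasDerivAt x hd.hasDerivAt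
    rw [funext hh] at h1
    have := h1.deriv
    exact Complex.conj_eq_iff_im.mp this.symm
  · rw [deriv_zero_of_not_differentiableAt hd]
    simp

/-- If `ψ ∈ H¹(ℝ, ℂ)` solves
`-ψ'' - (ω + c²/4)ψ + A|ψ|²ψ + B|ψ|⁴ψ + G ψ Im(ψ' ψ̄) + γ ψ (H(|ψ|²))' = 0`,
then `Im(ψ' ψ̄) = 0` identically. -/
theorem stmt0 (ω c A B G γ : ℝ) (ψ : ℝ → ℂ)
    (hsm : ContDiff ℝ 2 ψ)
    (hL2 : MemLp ψ 2 volume)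
    (hL2d : MemLp (deriv ψ) 2 volume)
    (heq : ∀ x : ℝ,
      -(deriv (deriv ψ) x) - ((ω + c ^ 2 / 4 : ℝ) : ℂ) * ψ x
        + (A : ℂ) * (‖ψ x‖ : ℂ) ^ 2 * ψ x
        + (B : ℂ) * (‖ψ x‖ : ℂ) ^ 4 * ψ x
        + (G : ℂ) * ((deriv ψ x * (starRingEnd ℂ) (ψ x)).im : ℂ) * ψ x
        + (γ : ℂ) * ψ x * deriv (hilbertT fun y => ((‖ψ y‖ ^ 2 : ℝ) : ℂ)) x = 0) :
    ∀ x : ℝ, (deriv ψ x * (starRingEnd ℂ) (ψ x)).im = 0 := by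
  set D : ℝ → ℂ := deriv (hilbertT fun y => ((‖ψ y‖ ^ 2 : ℝ) : ℂ)) with hD
  set w : ℝ → ℝ := fun x => (deriv ψ x * (starRingEnd ℂ) (ψ x)).im with hw
  -- D is real-valued
  have hDim : ∀ x, (D x).im = 0 := by
    intro x
    exact im_deriv_eq_zero _ (hilbertT_conj_self _ (fun y => Complex.conj_ofReal _)) x
  -- differentiability facts
  have hψd : Differentiable ℝ ψ := hsm.differentiable (by norm_num)
  have h2 : ContDiff ℝ (1 + 1 : ℕ) ψ := by exact_mod_cast hsm
  have hψ1 : ContDiff ℝ (1 : ℕ) (deriv ψ) := by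
    have := (contDiff_succ_iff_deriv (n := (1 : ℕ))).mp h2
    exact this.2.2
  have hψdd : Differentiable ℝ (deriv ψ) := hψ1.differentiable (by norm_num)
  -- derivative of w
  have hwd : ∀ x, HasDerivAt w ((deriv (deriv ψ) x * (starRingEnd ℂ) (ψ x)).im) x := by
    intro x
    have h1 : HasDerivAt (deriv ψ) (deriv (deriv ψ) x) x := (hψdd x).hasDerivAt
    have h2' : HasDerivAt (fun y => (starRingEnd ℂ) (ψ y)) ((starRingEnd ℂ) (deriv ψ x)) x := by
      simpa [Function.comp_def] using
        Complex.conjCLE.hasFDerivAt.comp_hasDerivAt x (hψd x).hasDerivAt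
    have h3 := h1.mul h2'
    have h4 := Complex.imCLM.hasFDerivAt.comp_hasDerivAt x h3
    have h5 : (deriv (deriv ψ) x * (starRingEnd ℂ) (ψ x)
        + deriv ψ x * (starRingEnd ℂ) (deriv ψ x)).im
        = (deriv (deriv ψ) x * (starRingEnd ℂ) (ψ x)).im := by
      rw [Complex.add_im, Complex.mul_conj]
      simp
    simpa [Function.comp_def, h5, hw] using h4
  -- the derivative of w vanishes
  have hw0 : ∀ x, (deriv (deriv ψ) x * (starRingEnd ℂ) (ψ x)).im = 0 := by
    intro x
    have e2 : deriv (deriv ψ) x * (starRingEnd ℂ) (ψ x)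
        = (-((ω + c ^ 2 / 4 : ℝ) : ℂ) + (A : ℂ) * (‖ψ x‖ : ℂ) ^ 2
            + (B : ℂ) * (‖ψ x‖ : ℂ) ^ 4
            + (G : ℂ) * ((deriv ψ x * (starRingEnd ℂ) (ψ x)).im : ℂ)
            + (γ : ℂ) * D x) * (ψ x * (starRingEnd ℂ) (ψ x)) := by
      linear_combination (-(starRingEnd ℂ) (ψ x)) * heq x
    have him : (-((ω + c ^ 2 / 4 : ℝ) : ℂ) + (A : ℂ) * (‖ψ x‖ : ℂ) ^ 2
        + (B : ℂ) * (‖ψ x‖ : ℂ) ^ 4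
        + (G : ℂ) * ((deriv ψ x * (starRingEnd ℂ) (ψ x)).im : ℂ)
        + (γ : ℂ) * D x).im = 0 := by
      simp [Complex.add_im, Complex.neg_im, Complex.mul_im, Complex.ofReal_im,
        Complex.ofReal_re, ← Complex.ofReal_pow, hDim x]
    rw [e2, Complex.mul_conj, Complex.mul_im, him]
    simp
  -- w is constant
  have hconst : ∀ x, w x = w 0 := by
    intro x
    have hdiff : Differentiable ℝ w := fun y => (hwd y).differentiableAt
    have hzero : ∀ y, deriv w y = 0 := by
      intro y
      rw [(hwd y).deriv]
      exact hw0 y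
    exact is_const_of_deriv_eq_zero hdiff hzero x 0
  -- w is integrable
  have hconjψ : MemLp (fun x => (starRingEnd ℂ) (ψ x)) 2 volume := by
    refine ⟨Complex.continuous_conj.comp_aestronglyMeasurable hL2.1, ?_⟩
    rw [eLpNorm_congr_norm_ae (ae_of_all _ fun x => (RCLike.norm_conj (ψ x)))]
    exact hL2.2
  have hF1 : MemLp (fun x => deriv ψ x * (starRingEnd ℂ) (ψ x)) 1 volume := by
    have hpq : (1 : ENNReal) / 1 = 1 / 2 + 1 / 2 := by
      simp only [one_div, inv_one, ENNReal.inv_two_add_inv_two]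
    have := hconjψ.smul (r := 1) hL2d (hpqr := ⟨by simpa [one_div] using hpq.symm⟩)
    exact this
  have hInt : Integrable (fun x => deriv ψ x * (starRingEnd ℂ) (ψ x)) volume :=
    memLp_one_iff_integrable.mp hF1
  have hwInt : Integrable w volume := hInt.im
  -- a nonzero constant is not integrable on ℝ
  have hwc : Integrable (fun _ : ℝ => w 0) volume := by
    exact (integrable_congr (ae_of_all _ fun x => (hconst x))).mp hwInt
  have h0 : w 0 = 0 := by
    rcases (integrable_const_iff.mp hwc) with h | h
    · exact h
    · exfalso
      have h' := @measure_lt_top _ _ (volume : Measure ℝ) h Set.univ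
      rw [Real.volume_univ] at h'
      exact (lt_irrefl _ h')
  intro x
  rw [show (deriv ψ x * (starRingEnd ℂ) (ψ x)).im = w x from rfl, hconst x, h0]
end
end

section
/- For any real-valued f ∈ S(ℝ) (Schwartz class), ∫_ℝ x f'(x) · (Hf)'(x) dx = 0, where H is the Hilbert transform. -/
open MeasureTheory Real Complex Filter

noncomputable section

open SchwartzMap Topology
open scoped FourierTransform

/-- Coercion of a real Schwartz function to a complex Schwartz function. -/
def ofRealS (f : SchwartzMap ℝ ℝ) : SchwartzMap ℝ ℂ where
  toFun x := (f x : ℂ)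
  smooth' := Complex.ofRealCLM.contDiff.comp f.smooth'
  decay' := by
    intro k n
    obtain ⟨C, hC⟩ := f.decay' k n
    refine ⟨C, fun x => ?_⟩
    have h : (fun x : ℝ => ((f x : ℝ) : ℂ)) = (RCLike.ofRealLI (K := ℂ)) ∘ ⇑f := rfl
    have h2 : ‖iteratedFDeriv ℝ n (⇑(RCLike.ofRealLI (K := ℂ)) ∘ ⇑f) x‖
        = ‖iteratedFDeriv ℝ n (⇑f) x‖ :=
      LinearIsometry.norm_iteratedFDeriv_comp_left _ f.smooth'.contDiffAt (mod_cast le_top)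
    rw [h, h2]
    exact hC x

lemma measurable_signC : Measurable (fun ξ : ℝ => ((Real.sign ξ : ℝ) : ℂ)) := by
  apply Complex.measurable_ofReal.comp
  have : (Real.sign : ℝ → ℝ) = fun r => if r < 0 then (-1 : ℝ) else if 0 < r then 1 else 0 :=
    funext fun r => rfl
  rw [this]
  exact Measurable.ite (measurableSet_lt measurable_id measurable_const) measurable_const
    (Measurable.ite (measurableSet_lt measurable_const measurable_id) measurable_const
      measurable_const)

lemma norm_signC_le (ξ : ℝ) : ‖((Real.sign ξ : ℝ) : ℂ)‖ ≤ 1 := by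
  rw [Complex.norm_real]
  rcases Real.sign_apply_eq ξ with h | h | h <;> rw [h] <;> norm_num

lemma schwartz_bdd (G : SchwartzMap ℝ ℂ) : ∃ C, ∀ x, ‖G x‖ ≤ C := by
  obtain ⟨C, hC⟩ := G.decay' 0 0
  refine ⟨C, fun x => ?_⟩
  have := hC x
  simp only [pow_zero, one_mul, norm_iteratedFDeriv_zero] at this
  exact this

lemma int_mul_bdd {φ ψ : ℝ → ℂ} (hφ : Integrable φ) (hψc : Continuous ψ)
    (C : ℝ) (hC : ∀ x, ‖ψ x‖ ≤ C) : Integrable fun x => φ x * ψ x := by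
  refine (hφ.norm.const_mul C).mono'
    (hφ.aestronglyMeasurable.mul hψc.aestronglyMeasurable) (ae_of_all _ fun x => ?_)
  rw [norm_mul, mul_comm ‖φ x‖]
  exact mul_le_mul_of_nonneg_right (hC x) (norm_nonneg _)

lemma fourierIntegral_const_mul' (c : ℂ) (h : ℝ → ℂ) (ξ : ℝ) :
    𝓕 (fun x => c * h x) ξ = c * 𝓕 h ξ := by
  simp_rw [Real.fourier_eq, ← smul_eq_mul, smul_comm _ c, integral_smul]

/-- Pohozaev identity: for real-valued Schwartz `f`, `∫ x f'(x) (Hf)'(x) dx = 0`. -/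
theorem stmt13 (f : SchwartzMap ℝ ℝ) :
    ∫ x : ℝ, (x : ℂ) * deriv (fun y : ℝ => ((f y : ℝ) : ℂ)) x
      * deriv (hilbertT fun y : ℝ => ((f y : ℝ) : ℂ)) x = 0 := by
  -- Set up the Schwartz functions
  set F : SchwartzMap ℝ ℂ := ofRealS f with hF
  have hFfun : (fun y : ℝ => ((f y : ℝ) : ℂ)) = ⇑F := rfl
  set g : SchwartzMap ℝ ℂ := SchwartzMap.derivCLM ℝ ℂ F with hg
  have hgF : ⇑g = deriv ⇑F := funext fun x => SchwartzMap.derivCLM_apply ℝ F x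
  set G : SchwartzMap ℝ ℂ := SchwartzMap.fourierTransformCLM ℝ g with hGdef
  have hG : ⇑G = 𝓕 ⇑g := rfl
  set G' : SchwartzMap ℝ ℂ := SchwartzMap.derivCLM ℝ ℂ G with hG'def
  have hG' : ⇑G' = deriv ⇑G := funext fun x => SchwartzMap.derivCLM_apply ℝ G x
  set FT : SchwartzMap ℝ ℂ := SchwartzMap.fourierTransformCLM ℝ F with hFTdef
  have hFT : 𝓕 ⇑F = ⇑FT := rfl
  -- Fourier transform of g
  have hFg : 𝓕 ⇑g = fun ξ : ℝ => (2 * π * Complex.I * ξ) • 𝓕 ⇑F ξ := by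
    rw [hgF]
    exact Real.fourier_deriv F.integrable F.differentiable (hgF ▸ g.integrable)
  have hG0 : G 0 = 0 := by
    rw [hG, hFg]; simp
  -- the multiplier
  set m : ℝ → ℂ := fun ξ => -Complex.I * ((Real.sign ξ : ℝ) : ℂ) with hm
  have hmmeas : AEStronglyMeasurable m volume :=
    ((measurable_const.mul measurable_signC)).aestronglyMeasurable
  have hmbdd : ∀ ξ, ‖m ξ‖ ≤ 1 := by
    intro ξ
    rw [hm]
    calc ‖-Complex.I * ((Real.sign ξ : ℝ) : ℂ)‖ = ‖((Real.sign ξ : ℝ) : ℂ)‖ := by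
          rw [norm_mul]; simp
      _ ≤ 1 := norm_signC_le ξ
  -- integrability
  have intW : Integrable (fun ξ => m ξ * 𝓕 ⇑F ξ) := by
    rw [hFT]
    exact FT.integrable.bdd_mul hmmeas (ae_of_all _ hmbdd)
  have intXW : Integrable (fun ξ : ℝ => ξ • (m ξ * 𝓕 ⇑F ξ)) := by
    refine (FT.integrable_pow_mul volume 1).mono'
      ((continuous_id.aestronglyMeasurable.smul) intW.aestronglyMeasurable)
      (ae_of_all _ fun ξ => ?_)
    rw [norm_smul, pow_one, hFT, norm_mul]
    calc ‖ξ‖ * (‖m ξ‖ * ‖FT ξ‖) ≤ ‖ξ‖ * (1 * ‖FT ξ‖) := by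
          gcongr; exact hmbdd ξ
      _ = ‖ξ‖ * ‖FT ξ‖ := by ring
  -- the derivative of the Hilbert transform
  set w : ℝ → ℂ := fun ξ => m ξ * 𝓕 ⇑F ξ with hw
  have hHT : hilbertT ⇑F = fun x => 𝓕 w (-x) := by
    funext y
    exact Real.fourierInv_eq_fourier_neg w y
  have hderivH : ∀ x : ℝ, deriv (hilbertT ⇑F) x = 𝓕 (fun ξ => m ξ * G ξ) (-x) := by
    intro x
    rw [hHT]
    have step := (((Real.hasDerivAt_fourier intW intXW (-x)).scomp x
      (hasDerivAt_neg x))).deriv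
    rw [show (fun x : ℝ => 𝓕 w (-x)) = 𝓕 w ∘ Neg.neg from rfl, step]
    rw [Real.fourier_eq, Real.fourier_eq, ← integral_smul]
    congr 1
    funext ξ
    rw [smul_comm]
    congr 1
    rw [neg_one_smul ℝ, hG, hFg]
    simp only [hw, smul_eq_mul]
    ring
  set w' : ℝ → ℂ := fun ξ => m ξ * G ξ with hw'
  have intW' : Integrable w' := G.integrable.bdd_mul hmmeas (ae_of_all _ hmbdd)
  set hfun : ℝ → ℂ := fun x => (x : ℂ) * g x with hhfun
  set u : ℝ → ℂ := fun x => hfun (-x) with hu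
  have inth : Integrable hfun := by
    refine (g.integrable_pow_mul volume 1).mono'
      ((Complex.continuous_ofReal.comp continuous_id).aestronglyMeasurable.mul
        g.continuous.aestronglyMeasurable) (ae_of_all _ fun x => ?_)
    rw [norm_mul, pow_one, Complex.norm_real]
  have intU : Integrable u := inth.comp_neg
  -- step 1 : rewrite the integrand
  have step1 : (∫ x : ℝ, (x : ℂ) * deriv (fun y : ℝ => ((f y : ℝ) : ℂ)) x
      * deriv (hilbertT fun y : ℝ => ((f y : ℝ) : ℂ)) x)
      = ∫ x : ℝ, hfun x * 𝓕 w' (-x) := by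
    congr 1
    funext x
    rw [hFfun, ← hgF, hderivH x]
  -- step 2 : reflect the integral
  have step2 : (∫ x : ℝ, hfun x * 𝓕 w' (-x)) = ∫ x : ℝ, 𝓕 w' x * u x := by
    rw [← integral_neg_eq_self (fun x : ℝ => 𝓕 w' x * u x) volume]
    congr 1
    funext x
    rw [hu]
    simp only [neg_neg]
    ring
  -- step 3 : the multiplication formula (self-adjointness of the Fourier transform)
  have hflip : (innerₗ ℝ).flip = innerₗ ℝ := by
    apply LinearMap.ext; intro x; apply LinearMap.ext; intro y
    exact real_inner_comm x y
  have step3 : (∫ x : ℝ, 𝓕 w' x * u x) = ∫ ξ : ℝ, w' ξ * 𝓕 u ξ := by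
    have h3 := VectorFourier.integral_fourierIntegral_smul_eq_flip (L := innerₗ ℝ)
      Real.continuous_fourierChar continuous_inner intW' intU
    rw [hflip] at h3
    simp only [← smul_eq_mul]
    exact h3
  -- compute 𝓕 u
  have hc0 : (-(2 * π * Complex.I)) ≠ 0 := by
    simp [Real.pi_ne_zero, Complex.I_ne_zero, Complex.ext_iff, Real.pi_pos.ne']
  have hFhfun : ∀ ξ : ℝ, (-(2 * π * Complex.I)) * 𝓕 hfun ξ = G' ξ := by
    intro ξ
    have hxg : Integrable (fun x : ℝ => x • ⇑g x) := by
      refine inth.congr ?_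
      refine ae_of_all _ fun x => ?_
      rw [hhfun]
      exact (Complex.real_smul (z := g x)).symm
    have hd := Real.deriv_fourier g.integrable hxg
    have h1 : G' ξ = deriv (𝓕 ⇑g) ξ := by rw [← hG, ← hG']
    rw [h1, hd]
    have h2 : (fun x : ℝ => (-2 * π * Complex.I * x) • ⇑g x)
        = fun x : ℝ => (-(2 * π * Complex.I)) * hfun x := by
      funext x
      rw [hhfun, smul_eq_mul]
      ring
    rw [h2, fourierIntegral_const_mul']
  have hFu' : ∀ ξ : ℝ, 𝓕 u ξ = (-(2 * π * Complex.I))⁻¹ * G' (-ξ) := by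
    intro ξ
    have hcomp : 𝓕 u ξ = 𝓕 hfun (-ξ) := by
      calc 𝓕 u ξ = 𝓕⁻ hfun ξ := by
            rw [Real.fourierInv_eq_fourier_comp_neg]
        _ = 𝓕 hfun (-ξ) := Real.fourierInv_eq_fourier_neg hfun ξ
    rw [hcomp, ← hFhfun (-ξ), ← mul_assoc, inv_mul_cancel₀ hc0, one_mul]
  -- pull out the constants
  set J : ℂ := ∫ ξ : ℝ, ((Real.sign ξ : ℝ) : ℂ) * (G ξ * G' (-ξ)) with hJ
  have step4 : (∫ ξ : ℝ, w' ξ * 𝓕 u ξ)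
      = (-Complex.I * (-(2 * π * Complex.I))⁻¹) * J := by
    rw [hJ, ← integral_const_mul]
    congr 1
    funext ξ
    rw [hFu' ξ, hw', hm]
    ring
  rw [step1, step2, step3, step4]
  have hJ0 : J = 0 := by
    -- derivative of the even product ψ ξ = G ξ * G (-ξ)
    have hGd : ∀ t : ℝ, HasDerivAt ⇑G (G' t) t := fun t =>
      (congrFun hG' t) ▸ G.differentiableAt.hasDerivAt
    have hGneg : ∀ t : ℝ, HasDerivAt (fun s : ℝ => G (-s)) (-G' (-t)) t := by
      intro t
      have h := (hGd (-t)).scomp t (hasDerivAt_neg t)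
      simpa [Function.comp_def] using h
    set ψ : ℝ → ℂ := fun ξ => G ξ * G (-ξ) with hψ
    set D : ℝ → ℂ := fun ξ => G' ξ * G (-ξ) + G ξ * -G' (-ξ) with hD
    have hψd : ∀ t : ℝ, HasDerivAt ψ (D t) t := fun t => (hGd t).mul (hGneg t)
    -- integrability
    obtain ⟨C₁, hC₁⟩ := schwartz_bdd G
    obtain ⟨C₂, hC₂⟩ := schwartz_bdd G'
    have hGnegC : Continuous fun ξ : ℝ => ⇑G (-ξ) := G.continuous.comp continuous_neg
    have hG'negC : Continuous fun ξ : ℝ => ⇑G' (-ξ) := G'.continuous.comp continuous_neg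
    have intA : Integrable (fun ξ : ℝ => G' ξ * G (-ξ)) :=
      int_mul_bdd G'.integrable hGnegC C₁ (fun x => hC₁ (-x))
    have intB : Integrable (fun ξ : ℝ => G ξ * G' (-ξ)) :=
      int_mul_bdd G.integrable hG'negC C₂ (fun x => hC₂ (-x))
    have intD : Integrable D := by
      refine (intA.sub intB).congr (ae_of_all _ fun ξ => ?_)
      simp only [Pi.sub_apply, hD]; ring
    -- decay at infinity
    have hGtop : Tendsto ⇑G atTop (𝓝 0) :=
      (zero_at_infty G).mono_left _root_.atTop_le_cocompact
    have hGbot : Tendsto ⇑G atBot (𝓝 0) :=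
      (zero_at_infty G).mono_left _root_.atBot_le_cocompact
    have hGnegtop : Tendsto (fun ξ : ℝ => ⇑G (-ξ)) atTop (𝓝 0) :=
      hGbot.comp tendsto_neg_atTop_atBot
    have hψtop : Tendsto ψ atTop (𝓝 0) := by
      have := hGtop.mul hGnegtop
      simpa using this
    have hψ0 : ψ 0 = 0 := by rw [hψ]; simp [hG0]
    -- FTC on (0, ∞)
    have hIoi : ∫ ξ in Set.Ioi (0:ℝ), D ξ = 0 - ψ 0 :=
      integral_Ioi_of_hasDerivAt_of_tendsto' (fun t _ => hψd t) intD.integrableOn hψtop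
    -- the integral on (-∞, 0] by reflection
    have hDneg : ∀ ξ : ℝ, D (-ξ) = -D ξ := by
      intro ξ; rw [hD]; simp only [neg_neg]; ring
    have hIic : ∫ ξ in Set.Iic (0:ℝ), D ξ = ψ 0 := by
      have h1 : ∫ ξ in Set.Ioi (0:ℝ), D (-ξ) = ∫ ξ in Set.Iic (-(0:ℝ)), D ξ :=
        integral_comp_neg_Ioi 0 D
      rw [neg_zero] at h1
      rw [← h1]
      have h2 : ∫ ξ in Set.Ioi (0:ℝ), D (-ξ) = ∫ ξ in Set.Ioi (0:ℝ), -D ξ := by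
        simp only [hDneg]
      rw [h2, integral_neg, hIoi]
      ring
    -- integrals with the sign factor
    have intSD : Integrable (fun ξ : ℝ => ((Real.sign ξ : ℝ) : ℂ) * D ξ) :=
      intD.bdd_mul measurable_signC.aestronglyMeasurable (ae_of_all _ norm_signC_le)
    have hsplit : (∫ ξ : ℝ, ((Real.sign ξ : ℝ) : ℂ) * D ξ)
        = (∫ ξ in Set.Iic (0:ℝ), ((Real.sign ξ : ℝ) : ℂ) * D ξ)
          + ∫ ξ in Set.Ioi (0:ℝ), ((Real.sign ξ : ℝ) : ℂ) * D ξ :=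
      (intervalIntegral.integral_Iic_add_Ioi intSD.integrableOn intSD.integrableOn).symm
    have hIoiS : (∫ ξ in Set.Ioi (0:ℝ), ((Real.sign ξ : ℝ) : ℂ) * D ξ)
        = ∫ ξ in Set.Ioi (0:ℝ), D ξ := by
      refine setIntegral_congr_fun measurableSet_Ioi fun ξ hξ => ?_
      rw [Real.sign_of_pos hξ]
      push_cast; ring
    have hIicS : (∫ ξ in Set.Iic (0:ℝ), ((Real.sign ξ : ℝ) : ℂ) * D ξ)
        = -∫ ξ in Set.Iic (0:ℝ), D ξ := by
      rw [← integral_neg]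
      refine setIntegral_congr_ae measurableSet_Iic ?_
      filter_upwards [compl_mem_ae_iff.mpr (measure_singleton (0:ℝ))] with ξ hξ hmem
      have hlt : ξ < 0 := lt_of_le_of_ne hmem hξ
      rw [Real.sign_of_neg hlt]
      push_cast; ring
    have hT : (∫ ξ : ℝ, ((Real.sign ξ : ℝ) : ℂ) * D ξ) = 0 := by
      rw [hsplit, hIoiS, hIicS, hIoi, hIic, hψ0]; ring
    -- relate to J by symmetrization
    have intSA : Integrable (fun ξ : ℝ => ((Real.sign ξ : ℝ) : ℂ) * (G' ξ * G (-ξ))) :=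
      intA.bdd_mul measurable_signC.aestronglyMeasurable (ae_of_all _ norm_signC_le)
    have intSB : Integrable (fun ξ : ℝ => ((Real.sign ξ : ℝ) : ℂ) * (G ξ * G' (-ξ))) :=
      intB.bdd_mul measurable_signC.aestronglyMeasurable (ae_of_all _ norm_signC_le)
    have hTsub : (∫ ξ : ℝ, ((Real.sign ξ : ℝ) : ℂ) * D ξ)
        = (∫ ξ : ℝ, ((Real.sign ξ : ℝ) : ℂ) * (G' ξ * G (-ξ)))
          - ∫ ξ : ℝ, ((Real.sign ξ : ℝ) : ℂ) * (G ξ * G' (-ξ)) := by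
      rw [← integral_sub intSA intSB]
      congr 1
      funext ξ
      rw [hD]; ring
    have hKJ : (∫ ξ : ℝ, ((Real.sign ξ : ℝ) : ℂ) * (G' ξ * G (-ξ))) = -J := by
      rw [hJ, ← integral_neg,
        ← integral_neg_eq_self
          (fun ξ : ℝ => -(((Real.sign ξ : ℝ) : ℂ) * (G ξ * G' (-ξ)))) volume]
      congr 1
      funext ξ
      rw [Real.sign_neg]
      push_cast
      simp only [neg_neg]
      ring
    have hzero : (0:ℂ) = -J - J := by
      rw [← hT, hTsub, hKJ, hJ]
    linear_combination ((1:ℂ)/2) * hzero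
  rw [hJ0, mul_zero]
end
end

section
/- Let Λ₁ > 0 and δ > 0. There exists η = η(Λ₁, δ) > 0 such that: if f ∈ (Ḣ¹ ∩ L⁴)(ℝ, ℂ) satisfies ‖f'‖_{L²} + ‖f‖_{L⁴} ≤ Λ₁ and ‖f‖_{L⁶} ≥ δ, then sup_{y∈ℝ} ∫_{y-1/2}^{y+1/2} |f|⁶ dx ≥ η. -/
open MeasureTheory Real

/-- Local concentration: if `f ∈ Ḣ¹ ∩ L⁴` with `‖f'‖_{L²} + ‖f‖_{L⁴} ≤ Λ₁` and
`‖f‖_{L⁶} ≥ δ`, then some unit interval carries at least `η = η(Λ₁, δ) > 0`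
of the `L⁶` mass. -/
theorem stmt18 (Λ₁ δ : ℝ) (hΛ : 0 < Λ₁) (hδ : 0 < δ) :
    ∃ η : ℝ, 0 < η ∧ ∀ f : ℝ → ℂ,
      Differentiable ℝ f → MemLp (deriv f) 2 volume → MemLp f 4 volume →
      (∫ x : ℝ, ‖deriv f x‖ ^ 2) ^ ((1 : ℝ) / 2)
          + (∫ x : ℝ, ‖f x‖ ^ 4) ^ ((1 : ℝ) / 4) ≤ Λ₁ →
      δ ≤ (∫ x : ℝ, ‖f x‖ ^ 6) ^ ((1 : ℝ) / 6) →
      ∃ y : ℝ, η ≤ ∫ x in Set.Ioo (y - 1 / 2) (y + 1 / 2), ‖f x‖ ^ 6 := by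
  set c : ℝ := δ ^ 3 / (2 * Λ₁ ^ 2) with hc_def
  have hc0 : 0 < c := by positivity
  set r : ℝ := min (1 / 2) (c ^ 2 / (4 * Λ₁ ^ 2)) with hr_def
  have hr0 : 0 < r := lt_min (by norm_num) (by positivity)
  have hr_half : r ≤ 1 / 2 := min_le_left _ _
  refine ⟨(c / 2) ^ 6 * (2 * r), by positivity, ?_⟩
  intro f hdiff hd2 hf4 hbound hL6
  have hA0 : (0:ℝ) ≤ ∫ x : ℝ, ‖deriv f x‖ ^ 2 := integral_nonneg fun x => by positivity
  have hB0 : (0:ℝ) ≤ ∫ x : ℝ, ‖f x‖ ^ 4 := integral_nonneg fun x => by positivity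
  have hI0 : (0:ℝ) ≤ ∫ x : ℝ, ‖f x‖ ^ 6 := integral_nonneg fun x => by positivity
  have h1 : (∫ x : ℝ, ‖deriv f x‖ ^ 2) ^ ((1:ℝ)/2) ≤ Λ₁ := by
    have := Real.rpow_nonneg hB0 ((1:ℝ)/4); linarith
  have h2 : (∫ x : ℝ, ‖f x‖ ^ 4) ^ ((1:ℝ)/4) ≤ Λ₁ := by
    have := Real.rpow_nonneg hA0 ((1:ℝ)/2); linarith
  have hA : (∫ x : ℝ, ‖deriv f x‖ ^ 2) ≤ Λ₁ ^ 2 := by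
    calc (∫ x : ℝ, ‖deriv f x‖ ^ 2)
        = ((∫ x : ℝ, ‖deriv f x‖ ^ 2) ^ ((1:ℝ)/2)) ^ (2:ℕ) := by
          rw [← Real.rpow_natCast (_ ^ ((1:ℝ)/2)) 2, ← Real.rpow_mul hA0]; norm_num
      _ ≤ Λ₁ ^ 2 := pow_le_pow_left₀ (Real.rpow_nonneg hA0 _) h1 2
  have hB : (∫ x : ℝ, ‖f x‖ ^ 4) ≤ Λ₁ ^ 4 := by
    calc (∫ x : ℝ, ‖f x‖ ^ 4)
        = ((∫ x : ℝ, ‖f x‖ ^ 4) ^ ((1:ℝ)/4)) ^ (4:ℕ) := by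
          rw [← Real.rpow_natCast (_ ^ ((1:ℝ)/4)) 4, ← Real.rpow_mul hB0]; norm_num
      _ ≤ Λ₁ ^ 4 := pow_le_pow_left₀ (Real.rpow_nonneg hB0 _) h2 4
  have hI : δ ^ 6 ≤ ∫ x : ℝ, ‖f x‖ ^ 6 := by
    calc δ ^ 6 ≤ ((∫ x : ℝ, ‖f x‖ ^ 6) ^ ((1:ℝ)/6)) ^ (6:ℕ) :=
          pow_le_pow_left₀ hδ.le hL6 6
      _ = ∫ x : ℝ, ‖f x‖ ^ 6 := by
          rw [← Real.rpow_natCast (_ ^ ((1:ℝ)/6)) 6, ← Real.rpow_mul hI0]; norm_num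
  have hIint : Integrable (fun x => ‖f x‖ ^ 6) volume := by
    by_contra h
    rw [integral_undef h] at hI
    nlinarith [pow_pos hδ 6]
  have hf4int : Integrable (fun x => ‖f x‖ ^ 4) volume := by
    have h := hf4.integrable_norm_rpow (by norm_num) (by norm_num)
    refine h.congr (Filter.Eventually.of_forall fun x => ?_)
    show _ = _
    rw [ENNReal.toReal_ofNat]; norm_cast
  have hd2int : Integrable (fun x => ‖deriv f x‖ ^ 2) volume := by
    have h := hd2.integrable_norm_rpow (by norm_num) (by norm_num)
    refine h.congr (Filter.Eventually.of_forall fun x => ?_)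
    show _ = _
    rw [ENNReal.toReal_ofNat]; norm_cast
  -- existence of a point where |f| is large
  have hx : ∃ x₀ : ℝ, c < ‖f x₀‖ := by
    by_contra h
    push_neg at h
    have hle : (∫ x : ℝ, ‖f x‖ ^ 6) ≤ ∫ x : ℝ, c ^ 2 * ‖f x‖ ^ 4 := by
      refine integral_mono hIint (hf4int.const_mul _) fun x => ?_
      have h2' : ‖f x‖ ^ 2 ≤ c ^ 2 := pow_le_pow_left₀ (norm_nonneg _) (h x) 2
      calc ‖f x‖ ^ 6 = ‖f x‖ ^ 2 * ‖f x‖ ^ 4 := by ring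
        _ ≤ c ^ 2 * ‖f x‖ ^ 4 := by
            exact mul_le_mul_of_nonneg_right h2' (by positivity)
    rw [integral_const_mul] at hle
    have hcB : c ^ 2 * (∫ x : ℝ, ‖f x‖ ^ 4) ≤ c ^ 2 * Λ₁ ^ 4 :=
      mul_le_mul_of_nonneg_left hB (by positivity)
    have hval : c ^ 2 * Λ₁ ^ 4 = δ ^ 6 / 4 := by
      rw [hc_def]; field_simp; ring
    nlinarith [pow_pos hδ 6]
  obtain ⟨x₀, hx₀⟩ := hx
  -- Hölder continuity with exponent 1/2
  have hold : ∀ a b : ℝ, a ≤ b → ‖f b - f a‖ ≤ Λ₁ * (b - a) ^ ((1:ℝ)/2) := by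
    intro a b hab
    haveI : IsFiniteMeasure (volume.restrict (Set.Ioc a b)) :=
      ⟨by rw [Measure.restrict_apply_univ]; exact measure_Ioc_lt_top⟩
    have hint : IntegrableOn (deriv f) (Set.Ioc a b) volume :=
      ((hd2.restrict (Set.Ioc a b)).mono_exponent (by norm_num)).integrable le_rfl
    have hii : IntervalIntegrable (deriv f) volume a b :=
      (intervalIntegrable_iff_integrableOn_Ioc_of_le hab).2 hint
    have hftc : ∫ x in a..b, deriv f x = f b - f a :=
      intervalIntegral.integral_deriv_eq_sub (fun x _ => hdiff x) hii
    rw [← hftc]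
    calc ‖∫ x in a..b, deriv f x‖ ≤ ∫ x in a..b, ‖deriv f x‖ :=
          intervalIntegral.norm_integral_le_integral_norm hab
      _ = ∫ x in Set.Ioc a b, ‖deriv f x‖ * ‖(1:ℂ)‖ := by
          rw [intervalIntegral.integral_of_le hab]; simp
      _ ≤ (∫ x in Set.Ioc a b, ‖deriv f x‖ ^ (2:ℝ)) ^ ((1:ℝ)/2)
          * (∫ x in Set.Ioc a b, ‖(1:ℂ)‖ ^ (2:ℝ)) ^ ((1:ℝ)/2) := by
          refine integral_mul_norm_le_Lp_mul_Lq ?_ ?_ ?_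
          · constructor <;> norm_num
          · simpa using hd2.restrict (Set.Ioc a b)
          · simpa using (memLp_const (1:ℂ) (μ := volume.restrict (Set.Ioc a b)))
      _ = (∫ x in Set.Ioc a b, ‖deriv f x‖ ^ 2) ^ ((1:ℝ)/2) * (b - a) ^ ((1:ℝ)/2) := by
          have h1' : (∫ x in Set.Ioc a b, ‖deriv f x‖ ^ (2:ℝ))
              = ∫ x in Set.Ioc a b, ‖deriv f x‖ ^ 2 := by
            norm_num [Real.rpow_natCast]
          have h2' : (∫ x in Set.Ioc a b, ‖(1:ℂ)‖ ^ (2:ℝ)) = b - a := by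
            simp [Real.volume_Ioc, ENNReal.toReal_ofReal (by linarith : (0:ℝ) ≤ b - a), hab]
          rw [h1', h2']
      _ ≤ Λ₁ * (b - a) ^ ((1:ℝ)/2) := by
          have hset : (∫ x in Set.Ioc a b, ‖deriv f x‖ ^ 2) ≤ ∫ x : ℝ, ‖deriv f x‖ ^ 2 :=
            setIntegral_le_integral hd2int (Filter.Eventually.of_forall fun x => by positivity)
          have : (∫ x in Set.Ioc a b, ‖deriv f x‖ ^ 2) ^ ((1:ℝ)/2) ≤ Λ₁ :=
            le_trans (Real.rpow_le_rpow (setIntegral_nonneg measurableSet_Ioc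
              fun x _ => by positivity) hset (by norm_num)) h1
          exact mul_le_mul_of_nonneg_right this (Real.rpow_nonneg (by linarith) _)
  -- r^(1/2) bound
  have hrhalfpow : Λ₁ * r ^ ((1:ℝ)/2) ≤ c / 2 := by
    have hrle : r ≤ (c / (2 * Λ₁)) ^ 2 := by
      have : c ^ 2 / (4 * Λ₁ ^ 2) = (c / (2 * Λ₁)) ^ 2 := by ring
      rw [← this]; exact min_le_right _ _
    have hpos : (0:ℝ) ≤ c / (2 * Λ₁) := by positivity
    have h := Real.rpow_le_rpow hr0.le hrle (by norm_num : (0:ℝ) ≤ 1/2)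
    have heq : ((c / (2 * Λ₁)) ^ 2) ^ ((1:ℝ)/2) = c / (2 * Λ₁) := by
      rw [← Real.rpow_natCast (c / (2 * Λ₁)) 2, ← Real.rpow_mul hpos]
      norm_num
    rw [heq] at h
    calc Λ₁ * r ^ ((1:ℝ)/2) ≤ Λ₁ * (c / (2 * Λ₁)) := mul_le_mul_of_nonneg_left h hΛ.le
      _ = c / 2 := by field_simp
  -- on Ioo(x₀-r, x₀+r), ‖f x‖ ≥ c/2
  have hlow : ∀ x ∈ Set.Ioo (x₀ - r) (x₀ + r), c / 2 ≤ ‖f x‖ := by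
    intro x hx
    obtain ⟨hx1, hx2⟩ := hx
    have key : ‖f x₀ - f x‖ ≤ c / 2 ∨ ‖f x - f x₀‖ ≤ c / 2 := by
      rcases le_total x x₀ with hle | hle
      · left
        refine le_trans (hold x x₀ hle) (le_trans ?_ hrhalfpow)
        exact mul_le_mul_of_nonneg_left
          (Real.rpow_le_rpow (by linarith) (by linarith) (by norm_num)) hΛ.le
      · right
        refine le_trans (hold x₀ x hle) (le_trans ?_ hrhalfpow)
        exact mul_le_mul_of_nonneg_left
          (Real.rpow_le_rpow (by linarith) (by linarith) (by norm_num)) hΛ.le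
    rcases key with h | h
    · have := norm_sub_norm_le (f x₀) (f x)
      linarith
    · have := norm_sub_norm_le (f x) (f x₀)
      have h' := abs_norm_sub_norm_le (f x) (f x₀)
      have : ‖f x₀‖ - ‖f x‖ ≤ ‖f x - f x₀‖ := by
        have := abs_le.1 h'
        linarith [this.1]
      linarith
  refine ⟨x₀, ?_⟩
  have hsub : Set.Ioo (x₀ - r) (x₀ + r) ⊆ Set.Ioo (x₀ - 1/2) (x₀ + 1/2) :=
    Set.Ioo_subset_Ioo (by linarith) (by linarith)
  have hconst : (∫ _x in Set.Ioo (x₀ - r) (x₀ + r), (c/2) ^ 6) = (c/2) ^ 6 * (2 * r) := by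
    rw [setIntegral_const]
    rw [measureReal_def, Real.volume_Ioo]
    rw [ENNReal.toReal_ofReal (by linarith : (0:ℝ) ≤ x₀ + r - (x₀ - r))]
    rw [smul_eq_mul]; ring
  have step1 : (c/2) ^ 6 * (2 * r) ≤ ∫ x in Set.Ioo (x₀ - r) (x₀ + r), ‖f x‖ ^ 6 := by
    rw [← hconst]
    refine setIntegral_mono_on ?_ hIint.integrableOn measurableSet_Ioo fun x hx => ?_
    · exact integrableOn_const (by rw [Real.volume_Ioo]; exact ENNReal.ofReal_ne_top)
    · exact pow_le_pow_left₀ (by positivity) (hlow x hx) 6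
  have step2 : (∫ x in Set.Ioo (x₀ - r) (x₀ + r), ‖f x‖ ^ 6)
      ≤ ∫ x in Set.Ioo (x₀ - 1/2) (x₀ + 1/2), ‖f x‖ ^ 6 :=
    setIntegral_mono_set hIint.integrableOn
      (Filter.Eventually.of_forall fun x => by positivity) hsub.eventuallyLE
  linarith
end
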